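/- arXiv:2109.03466 — 5 statements merged into one kernel-verified Lean document; each statement's English description precedes it below -/
import Mathlib

section
/- Suppose $\underline{k} I_d \preceq \Sigma_i \preceq \overline{k} I_d$ for all $i=1,\dots,n$ with $0 < \underline{k} \le \overline{k}$, and suppose $\|X_i - x_0\|_2 \le r$ for all $i$ for some $x_0\in\mathbb{R}^d$ and $r>0$. Then for every weight vector $\alpha$ in the probability simplex, the ridgeline point $x^*(\alpha) = \left(\sum_i \alpha_i \Sigma_i^{-1}\right)^{-1}\sum_i \alpha_i \Sigma_i^{-1} X_i$ satisfies $\|x^*(\alpha) - x_0\|_2 \le (\overline{k}/\underline{k})\, r$. -/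
/-!
Put `A = ∑ αᵢ Σᵢ⁻¹`. Since `∑ αᵢ = 1`, `x*(α) - x₀ = A⁻¹ ∑ αᵢ Σᵢ⁻¹ (Xᵢ - x₀)`.
From `⟪Σᵢ y, y⟫ ≥ k̲ ‖y‖²` and Cauchy–Schwarz, `‖Σᵢ⁻¹ v‖ ≤ ‖v‖ / k̲`, so the inner sum, a convex
combination of vectors of norm at most `r / k̲`, has norm at most `r / k̲`.
From `0 ⪯ Σᵢ ⪯ k̄` one gets `‖Σᵢ z‖² ≤ k̄ ⟪Σᵢ z, z⟫`, i.e. `⟪Σᵢ⁻¹ y, y⟫ ≥ ‖y‖² / k̄`; this lower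
bound survives the convex combination, so `⟪A y, y⟫ ≥ ‖y‖² / k̄` and `‖A⁻¹ w‖ ≤ k̄ ‖w‖`.
-/

open Finset Matrix
open scoped RealInnerProductSpace

namespace LinearMap

variable {E : Type*} [NormedAddCommGroup E] [InnerProductSpace ℝ E] {T S : E →ₗ[ℝ] E}

theorem mul_norm_le_norm_apply_of_coercive {k : ℝ} (hT : ∀ x, k * ‖x‖ ^ 2 ≤ ⟪T x, x⟫) (x : E) :
    k * ‖x‖ ≤ ‖T x‖ := by
  rcases (norm_nonneg x).eq_or_lt with hx | hx
  · rw [← hx, mul_zero]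
    exact norm_nonneg _
  · refine le_of_mul_le_mul_right ?_ hx
    calc k * ‖x‖ * ‖x‖ = k * ‖x‖ ^ 2 := by ring
      _ ≤ ⟪T x, x⟫ := hT x
      _ ≤ ‖T x‖ * ‖x‖ := real_inner_le_norm _ _

theorem injective_of_coercive {k : ℝ} (hk : 0 < k) (hT : ∀ x, k * ‖x‖ ^ 2 ≤ ⟪T x, x⟫) :
    Function.Injective T := by
  refine (injective_iff_map_eq_zero T).mpr fun x hx => norm_eq_zero.mp ?_
  have := mul_norm_le_norm_apply_of_coercive hT x
  rw [hx, norm_zero] at this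
  exact le_antisymm (nonpos_of_mul_nonpos_right this hk) (norm_nonneg x)

theorem norm_le_of_coercive_of_rightInverse {k : ℝ} (hk : 0 < k)
    (hT : ∀ x, k * ‖x‖ ^ 2 ≤ ⟪T x, x⟫) (hTS : Function.RightInverse S T) (y : E) :
    ‖S y‖ ≤ k⁻¹ * ‖y‖ := by
  rw [le_inv_mul_iff₀ hk]
  simpa [hTS y] using mul_norm_le_norm_apply_of_coercive hT (S y)

theorem IsPositive.norm_apply_sq_le (hT : T.IsPositive) {c : ℝ} (hc : 0 < c)
    (hTc : ∀ x, ⟪T x, x⟫ ≤ c * ‖x‖ ^ 2) (x : E) : ‖T x‖ ^ 2 ≤ c * ⟪T x, x⟫ := by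
  -- expand the positivity of `T` at `x - c⁻¹ • T x`
  have hpos := hT.inner_nonneg_left (x - c⁻¹ • T x)
  have hsymm : ⟪T (T x), x⟫ = ‖T x‖ ^ 2 := by
    rw [hT.isSymmetric, real_inner_self_eq_norm_sq]
  simp only [map_sub, map_smul, inner_sub_left, inner_sub_right, real_inner_smul_left,
    real_inner_smul_right, real_inner_self_eq_norm_sq, hsymm] at hpos
  have hTTx : c⁻¹ * ⟪T (T x), T x⟫ ≤ ‖T x‖ ^ 2 := (inv_mul_le_iff₀ hc).mpr (hTc (T x))
  have : c⁻¹ * ‖T x‖ ^ 2 ≤ ⟪T x, x⟫ := by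
    nlinarith [mul_le_mul_of_nonneg_left hTTx (inv_nonneg.mpr hc.le)]
  rwa [inv_mul_le_iff₀ hc] at this

theorem IsPositive.inv_mul_norm_sq_le_inner_of_rightInverse (hT : T.IsPositive) {c : ℝ}
    (hc : 0 < c) (hTc : ∀ x, ⟪T x, x⟫ ≤ c * ‖x‖ ^ 2) (hTS : Function.RightInverse S T) (y : E) :
    c⁻¹ * ‖y‖ ^ 2 ≤ ⟪S y, y⟫ := by
  have := hT.norm_apply_sq_le hc hTc (S y)
  rwa [hTS y, real_inner_comm, ← inv_mul_le_iff₀ hc] at this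

theorem mul_norm_sq_le_inner_sum_smul {ι : Type*} (s : Finset ι) {T : ι → E →ₗ[ℝ] E}
    {α : ι → ℝ} (hα : ∀ i ∈ s, 0 ≤ α i) (hα1 : ∑ i ∈ s, α i = 1) {k : ℝ}
    (hT : ∀ i ∈ s, ∀ x, k * ‖x‖ ^ 2 ≤ ⟪T i x, x⟫) (x : E) :
    k * ‖x‖ ^ 2 ≤ ⟪(∑ i ∈ s, α i • T i) x, x⟫ := by
  calc k * ‖x‖ ^ 2 = ∑ i ∈ s, α i * (k * ‖x‖ ^ 2) := by rw [← sum_mul, hα1, one_mul]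
    _ ≤ ∑ i ∈ s, α i * ⟪T i x, x⟫ :=
      sum_le_sum fun i hi => mul_le_mul_of_nonneg_left (hT i hi x) (hα i hi)
    _ = ⟪(∑ i ∈ s, α i • T i) x, x⟫ := by
      simp only [sum_apply, smul_apply, sum_inner, real_inner_smul_left]

end LinearMap

namespace Matrix

variable {ι : Type*} [Fintype ι] [DecidableEq ι] {M : Matrix ι ι ℝ}

theorem mul_norm_sq_le_inner_toEuclideanLin {k : ℝ} (h : (M - k • 1).PosSemidef)
    (x : EuclideanSpace ℝ ι) : k * ‖x‖ ^ 2 ≤ ⟪M.toEuclideanLin x, x⟫ := by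
  have := (isPositive_toEuclideanLin_iff.mpr h).inner_nonneg_left x
  simpa [inner_sub_left, real_inner_smul_left, real_inner_self_eq_norm_sq] using this

theorem inner_toEuclideanLin_le_mul_norm_sq {c : ℝ} (h : (c • 1 - M).PosSemidef)
    (x : EuclideanSpace ℝ ι) : ⟪M.toEuclideanLin x, x⟫ ≤ c * ‖x‖ ^ 2 := by
  have := (isPositive_toEuclideanLin_iff.mpr h).inner_nonneg_left x
  simpa [inner_sub_left, real_inner_smul_left, real_inner_self_eq_norm_sq] using this

theorem rightInverse_toEuclideanLin_inv (hM : IsUnit M) :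
    Function.RightInverse M⁻¹.toEuclideanLin M.toEuclideanLin := fun x => by
  simp [toLpLin_apply, mulVec_mulVec, mul_nonsing_inv M ((isUnit_iff_isUnit_det M).mp hM)]

theorem leftInverse_toEuclideanLin_inv (hM : IsUnit M) :
    Function.LeftInverse M⁻¹.toEuclideanLin M.toEuclideanLin := fun x => by
  simp [toLpLin_apply, mulVec_mulVec, nonsing_inv_mul M ((isUnit_iff_isUnit_det M).mp hM)]

theorem isUnit_of_coercive {k : ℝ} (hk : 0 < k)
    (h : ∀ x, k * ‖x‖ ^ 2 ≤ ⟪M.toEuclideanLin x, x⟫) : IsUnit M := by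
  refine mulVec_injective_iff_isUnit.mp fun v w hvw => ?_
  simpa using LinearMap.injective_of_coercive hk h (a₁ := WithLp.toLp 2 v) (a₂ := WithLp.toLp 2 w)
    (by simp [toLpLin_apply, hvw])

theorem norm_toEuclideanLin_inv_apply_le_of_coercive {k : ℝ} (hk : 0 < k)
    (h : ∀ x, k * ‖x‖ ^ 2 ≤ ⟪M.toEuclideanLin x, x⟫) (y : EuclideanSpace ℝ ι) :
    ‖M⁻¹.toEuclideanLin y‖ ≤ k⁻¹ * ‖y‖ :=
  LinearMap.norm_le_of_coercive_of_rightInverse hk h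
    (rightInverse_toEuclideanLin_inv (isUnit_of_coercive hk h)) y

theorem PosDef.inv_mul_norm_sq_le_inner_toEuclideanLin_inv (hM : M.PosDef) {c : ℝ} (hc : 0 < c)
    (h : (c • 1 - M).PosSemidef) (y : EuclideanSpace ℝ ι) :
    c⁻¹ * ‖y‖ ^ 2 ≤ ⟪M⁻¹.toEuclideanLin y, y⟫ :=
  (isPositive_toEuclideanLin_iff.mpr hM.posSemidef).inv_mul_norm_sq_le_inner_of_rightInverse hc
    (inner_toEuclideanLin_le_mul_norm_sq h) (rightInverse_toEuclideanLin_inv hM.isUnit) y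

end Matrix

theorem ridgeline_ball_bound_general {d n : ℕ}
    (X : Fin n → EuclideanSpace ℝ (Fin d))
    (Sig : Fin n → Matrix (Fin d) (Fin d) ℝ)
    (hpd : ∀ i, (Sig i).PosDef)
    (kl ku : ℝ) (hkl : 0 < kl) (hku : kl ≤ ku)
    (hlow : ∀ i, (Sig i - kl • (1 : Matrix (Fin d) (Fin d) ℝ)).PosSemidef)
    (hhigh : ∀ i, (ku • (1 : Matrix (Fin d) (Fin d) ℝ) - Sig i).PosSemidef)
    (x₀ : EuclideanSpace ℝ (Fin d)) (r : ℝ)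
    (hX : ∀ i, ‖X i - x₀‖ ≤ r)
    (α : Fin n → ℝ) (hα : ∀ i, 0 ≤ α i) (hα1 : ∑ i, α i = 1) :
    ‖Matrix.toEuclideanLin (∑ i, α i • (Sig i)⁻¹)⁻¹
        (∑ i, α i • Matrix.toEuclideanLin (Sig i)⁻¹ (X i)) - x₀‖
      ≤ (ku / kl) * r := by
  set A := ∑ i, α i • (Sig i)⁻¹
  have hku₀ : 0 < ku := hkl.trans_le hku
  have hA_coercive : ∀ y, ku⁻¹ * ‖y‖ ^ 2 ≤ ⟪A.toEuclideanLin y, y⟫ := by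
    simp only [A, map_sum, map_smul]
    exact LinearMap.mul_norm_sq_le_inner_sum_smul univ (fun i _ => hα i) hα1 fun i _ =>
      (hpd i).inv_mul_norm_sq_le_inner_toEuclideanLin_inv hku₀ (hhigh i)
  have hdiff : A⁻¹.toEuclideanLin (∑ i, α i • (Sig i)⁻¹.toEuclideanLin (X i)) - x₀
      = A⁻¹.toEuclideanLin (∑ i, α i • (Sig i)⁻¹.toEuclideanLin (X i - x₀)) := by
    conv_lhs => rw [← leftInverse_toEuclideanLin_inv (isUnit_of_coercive (inv_pos.mpr hku₀)
      hA_coercive) x₀, ← LinearMap.map_sub]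
    simp only [A, map_sum, map_smul, LinearMap.sum_apply, LinearMap.smul_apply, map_sub,
      smul_sub, sum_sub_distrib]
  have hmean : ‖∑ i, α i • (Sig i)⁻¹.toEuclideanLin (X i - x₀)‖ ≤ kl⁻¹ * r := by
    refine mem_closedBall_zero_iff.mp <| (convex_closedBall _ _).sum_mem (fun i _ => hα i) hα1
      fun i _ => mem_closedBall_zero_iff.mpr ?_
    calc ‖(Sig i)⁻¹.toEuclideanLin (X i - x₀)‖ ≤ kl⁻¹ * ‖X i - x₀‖ :=
          norm_toEuclideanLin_inv_apply_le_of_coercive hkl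
            (mul_norm_sq_le_inner_toEuclideanLin (hlow i)) _
      _ ≤ kl⁻¹ * r := by gcongr; exact hX i
  rw [hdiff]
  calc _ ≤ ku * ‖∑ i, α i • (Sig i)⁻¹.toEuclideanLin (X i - x₀)‖ := by
        simpa only [inv_inv] using
          norm_toEuclideanLin_inv_apply_le_of_coercive (inv_pos.mpr hku₀) hA_coercive _
    _ ≤ ku * (kl⁻¹ * r) := by gcongr
    _ = ku / kl * r := by ring

/-- Support bound for the ridgeline manifold with general covariances:
if `kl • 1 ⪯ Σ i ⪯ ku • 1` and `‖X i - x₀‖ ≤ r` for all `i`, then every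
ridgeline point `x*(α)` lies within distance `(ku/kl) r` of `x₀`. -/
theorem ridgeline_ball_bound {d n : ℕ}
    (X : Fin n → EuclideanSpace ℝ (Fin d))
    (Sig : Fin n → Matrix (Fin d) (Fin d) ℝ)
    (hpd : ∀ i, (Sig i).PosDef)
    (kl ku : ℝ) (hkl : 0 < kl) (hku : kl ≤ ku)
    (hlow : ∀ i, (Sig i - kl • (1 : Matrix (Fin d) (Fin d) ℝ)).PosSemidef)
    (hhigh : ∀ i, (ku • (1 : Matrix (Fin d) (Fin d) ℝ) - Sig i).PosSemidef)
    (x₀ : EuclideanSpace ℝ (Fin d)) (r : ℝ) (hr : 0 < r)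
    (hX : ∀ i, ‖X i - x₀‖ ≤ r)
    (α : Fin n → ℝ) (hα : ∀ i, 0 ≤ α i) (hα1 : ∑ i, α i = 1) :
    ‖Matrix.toEuclideanLin (∑ i, α i • (Sig i)⁻¹)⁻¹
        (∑ i, α i • Matrix.toEuclideanLin (Sig i)⁻¹ (X i)) - x₀‖
      ≤ (ku / kl) * r :=
  ridgeline_ball_bound_general X Sig hpd kl ku hkl hku hlow hhigh x₀ r hX α hα hα1
end

section
/- If $\Sigma_i = c_i \Sigma$ for positive scalars $c_i$ and a fixed positive-definite matrix $\Sigma$, then for every $\alpha$ in the probability simplex, the ridgeline point $x^*(\alpha) = \left(\sum_i \alpha_i \Sigma_i^{-1}\right)^{-1}\sum_i \alpha_i \Sigma_i^{-1} X_i$ lies in the convex hull of $\{X_1,\dots,X_n\}$; conversely, every point of the convex hull arises as $x^*(\alpha)$ for some $\alpha$ in the simplex. Hence the ridgeline manifold equals $\mathrm{conv}(\{X_1,\dots,X_n\})$. -/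
open MeasureTheory Matrix Finset

lemma ridgeline_sum_pos {n : ℕ} (β g : Fin n → ℝ) (hβ0 : ∀ i, 0 ≤ β i)
    (hβ1 : ∑ i, β i = 1) (hg : ∀ i, 0 < g i) : 0 < ∑ i, β i * g i := by
  refine Finset.sum_pos' (fun i _ => mul_nonneg (hβ0 i) (hg i).le) ?_
  by_contra h
  push_neg at h
  have : ∑ i, β i = 0 := Finset.sum_eq_zero fun i _ => by
    have h' := h i (Finset.mem_univ i)
    have hnn : 0 ≤ β i * g i := mul_nonneg (hβ0 i) (hg i).le
    have h0 : β i * g i = 0 := le_antisymm h' hnn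
    rcases mul_eq_zero.1 h0 with h | h
    · exact h
    · exact absurd h (hg i).ne'
  rw [this] at hβ1; norm_num at hβ1

lemma ridgeline_compute {d n : ℕ} (X : Fin n → (Fin d → ℝ))
    (S : Matrix (Fin d) (Fin d) ℝ) (hS : S.PosDef)
    (c : Fin n → ℝ) (hc : ∀ i, 0 < c i) (α : Fin n → ℝ)
    (ht : ∑ i, α i * (c i)⁻¹ ≠ 0) :
    ((∑ i, α i • (c i • S)⁻¹)⁻¹).mulVec
        (∑ i, α i • ((c i • S)⁻¹).mulVec (X i))
      = ∑ i, (α i * (c i)⁻¹ * (∑ j, α j * (c j)⁻¹)⁻¹) • X i := by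
  set t : ℝ := ∑ i, α i * (c i)⁻¹ with ht_def
  have hSdet : IsUnit S.det := isUnit_iff_ne_zero.2 hS.det_pos.ne'
  have hinv : ∀ i, (c i • S)⁻¹ = (c i)⁻¹ • S⁻¹ := by
    intro i
    haveI := invertibleOfNonzero (hc i).ne'
    rw [S.inv_smul (c i) hSdet, invOf_eq_right_inv (mul_inv_cancel₀ (hc i).ne')]
  have h1 : (∑ i, α i • (c i • S)⁻¹) = t • S⁻¹ := by
    simp_rw [hinv, smul_smul, ht_def, ← Finset.sum_smul]
  have h2 : (t • S⁻¹)⁻¹ = t⁻¹ • S := by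
    haveI := invertibleOfNonzero ht
    rw [S⁻¹.inv_smul t (S.isUnit_nonsing_inv_det hSdet), invOf_eq_right_inv (mul_inv_cancel₀ ht),
      Matrix.nonsing_inv_nonsing_inv _ hSdet]
  rw [h1, h2]
  rw [show (∑ i, α i • ((c i • S)⁻¹).mulVec (X i))
      = ∑ i, (α i * (c i)⁻¹) • S⁻¹.mulVec (X i) by
    refine Finset.sum_congr rfl fun i _ => ?_
    rw [hinv i, smul_mulVec, smul_smul]]
  have hms := map_sum (Matrix.mulVecLin (t⁻¹ • S))
    (fun i => (α i * (c i)⁻¹) • S⁻¹.mulVec (X i)) Finset.univ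
  simp only [Matrix.mulVecLin_apply] at hms
  rw [hms]
  refine Finset.sum_congr rfl fun i _ => ?_
  rw [Matrix.mulVec_smul, smul_mulVec, Matrix.mulVec_mulVec,
    S.mul_nonsing_inv hSdet, Matrix.one_mulVec, smul_smul]

/-- In the case of proportional covariances `Σ i = c i • Σ`, the ridgeline
manifold `{x*(α) : α ∈ Δ_{n-1}}` is exactly the convex hull of the data. -/
theorem ridgeline_eq_convexHull_of_proportional {d n : ℕ}
    (X : Fin n → (Fin d → ℝ))
    (S : Matrix (Fin d) (Fin d) ℝ) (hS : S.PosDef)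
    (c : Fin n → ℝ) (hc : ∀ i, 0 < c i) :
    {x : Fin d → ℝ | ∃ α : Fin n → ℝ, (∀ i, 0 ≤ α i) ∧ (∑ i, α i = 1) ∧
        x = ((∑ i, α i • (c i • S)⁻¹)⁻¹).mulVec
              (∑ i, α i • ((c i • S)⁻¹).mulVec (X i))}
      = convexHull ℝ (Set.range X) := by
  ext x
  simp only [Set.mem_setOf_eq]
  constructor
  · rintro ⟨α, hα0, hα1, rfl⟩
    have ht : (0:ℝ) < ∑ i, α i * (c i)⁻¹ :=
      ridgeline_sum_pos α _ hα0 hα1 (fun i => inv_pos.2 (hc i))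
    rw [ridgeline_compute X S hS c hc α ht.ne']
    have hw1 : ∑ i, α i * (c i)⁻¹ * (∑ j, α j * (c j)⁻¹)⁻¹ = 1 := by
      rw [← Finset.sum_mul, mul_inv_cancel₀ ht.ne']
    have hmem := Finset.centerMass_mem_convexHull Finset.univ
      (fun i (_ : i ∈ Finset.univ) => mul_nonneg
        (mul_nonneg (hα0 i) (inv_nonneg.2 (hc i).le)) (inv_nonneg.2 ht.le))
      (by rw [hw1]; norm_num)
      (fun i _ => Set.mem_range_self (f := X) i)
    rwa [Finset.centerMass_eq_of_sum_1 _ _ hw1] at hmem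
  · intro hx
    rw [convexHull_range_eq_exists_affineCombination] at hx
    obtain ⟨s, w, hw0, hw1, rfl⟩ := hx
    set β : Fin n → ℝ := fun i => if i ∈ s then w i else 0 with hβ
    have hβ0 : ∀ i, 0 ≤ β i := fun i => by
      by_cases h : i ∈ s <;> simp [hβ, h, hw0 i]
    have hβ1 : ∑ i, β i = 1 := by
      rw [hβ]; simpa using (Finset.sum_ite_mem Finset.univ s w).trans
        (by rw [Finset.univ_inter, hw1])
    have hβx : s.affineCombination ℝ X w = ∑ i, β i • X i := by
      rw [s.affineCombination_eq_linear_combination X w hw1]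
      simp only [hβ, ite_smul, zero_smul]
      rw [Finset.sum_ite_mem, Finset.univ_inter]
    set s0 : ℝ := ∑ j, β j * c j with hs0_def
    have hs0 : 0 < s0 := ridgeline_sum_pos β c hβ0 hβ1 hc
    refine ⟨fun i => β i * c i * s0⁻¹, fun i => mul_nonneg
      (mul_nonneg (hβ0 i) (hc i).le) (inv_nonneg.2 hs0.le), ?_, ?_⟩
    · rw [← Finset.sum_mul, ← hs0_def, mul_inv_cancel₀ hs0.ne']
    · have hαc : ∀ i, β i * c i * s0⁻¹ * (c i)⁻¹ = β i * s0⁻¹ := fun i => by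
        rw [mul_assoc (β i * c i), mul_comm s0⁻¹, ← mul_assoc, mul_assoc (β i), mul_inv_cancel₀ (hc i).ne', mul_one]
      have ht : ∑ i, β i * c i * s0⁻¹ * (c i)⁻¹ = s0⁻¹ := by
        simp_rw [hαc, ← Finset.sum_mul, hβ1, one_mul]
      rw [ridgeline_compute X S hS c hc _ (by rw [ht]; exact (inv_pos.2 hs0).ne')]
      rw [hβx]
      refine Finset.sum_congr rfl fun i _ => ?_
      rw [show (∑ j, β j * c j * s0⁻¹ * (c j)⁻¹) = s0⁻¹ from ht, hαc i, inv_inv,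
        mul_assoc, inv_mul_cancel₀ hs0.ne', mul_one]
end

section
/- If each $\Sigma_i$ is a diagonal positive-definite matrix, then for every $\alpha$ in the probability simplex and every coordinate $j\in\{1,\dots,d\}$, the $j$-th coordinate of the ridgeline point $x^*(\alpha) = \left(\sum_i \alpha_i \Sigma_i^{-1}\right)^{-1}\sum_i \alpha_i \Sigma_i^{-1} X_i$ lies in $[\min_i X_{ij}, \max_i X_{ij}]$. That is, the ridgeline manifold is contained in the axis-aligned minimum bounding box of the data. -/
open MeasureTheory Matrix Finset

/-- With diagonal covariances, every ridgeline point lies in the axis-aligned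
minimum bounding box of the data. -/
theorem ridgeline_mem_bounding_box_of_diagonal {d n : ℕ} (hn : 0 < n)
    (X : Fin n → (Fin d → ℝ))
    (Sig : Fin n → Matrix (Fin d) (Fin d) ℝ)
    (hdiag : ∀ i, (Sig i).IsDiag)
    (hpos : ∀ i j, 0 < Sig i j j)
    (α : Fin n → ℝ) (hα : ∀ i, 0 ≤ α i) (hα1 : ∑ i, α i = 1) :
    ∀ j : Fin d,
      ((∑ i, α i • (Sig i)⁻¹)⁻¹).mulVec
          (∑ i, α i • ((Sig i)⁻¹).mulVec (X i)) j ∈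
        Set.Icc
          (Finset.univ.inf'
            (Finset.univ_nonempty_iff.mpr (Fin.pos_iff_nonempty.mp hn))
            (fun i => X i j))
          (Finset.univ.sup'
            (Finset.univ_nonempty_iff.mpr (Fin.pos_iff_nonempty.mp hn))
            (fun i => X i j)) := by
  intro j
  have hinv : ∀ i, (Sig i)⁻¹ = diagonal (fun k => (Sig i k k)⁻¹) := by
    intro i
    apply Matrix.inv_eq_right_inv
    nth_rewrite 1 [← (hdiag i).diagonal_diag]
    rw [Matrix.diagonal_mul_diagonal]
    ext k l
    by_cases h : k = l
    · subst h
      simp [mul_inv_cancel₀ (hpos i k).ne', Matrix.one_apply_eq]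
    · simp [Matrix.diagonal_apply_ne _ h, Matrix.one_apply_ne h]
  have hαpos : ∃ i, 0 < α i := by
    by_contra h
    push_neg at h
    have : ∑ i, α i = 0 := Finset.sum_eq_zero fun i _ => le_antisymm (h i) (hα i)
    rw [hα1] at this; norm_num at this
  have hspos : ∀ k, 0 < ∑ i, α i * (Sig i k k)⁻¹ := by
    intro k
    obtain ⟨i, hi⟩ := hαpos
    exact Finset.sum_pos'
      (fun i _ => mul_nonneg (hα i) (inv_nonneg.mpr (hpos i k).le))
      ⟨i, Finset.mem_univ i, mul_pos hi (inv_pos.mpr (hpos i k))⟩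
  set f : Fin n → ℝ := fun i => α i * (Sig i j j)⁻¹ with hf
  have hf0 : ∀ i, 0 ≤ f i := fun i =>
    mul_nonneg (hα i) (inv_nonneg.mpr (hpos i j).le)
  have hs : 0 < ∑ i, f i := hspos j
  have hsum_diag : (∑ i, α i • (Sig i)⁻¹) =
      diagonal (fun k => ∑ i, α i * (Sig i k k)⁻¹) := by
    ext k l
    by_cases h : k = l
    · subst h
      simp [Matrix.sum_apply, hinv, Matrix.diagonal_apply_eq]
    · simp [Matrix.sum_apply, hinv, Matrix.diagonal_apply_ne _ h]
  have houter : (diagonal (fun k => ∑ i, α i * (Sig i k k)⁻¹))⁻¹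
      = diagonal (fun k => (∑ i, α i * (Sig i k k)⁻¹)⁻¹) := by
    apply Matrix.inv_eq_right_inv
    rw [Matrix.diagonal_mul_diagonal]
    ext k l
    by_cases h : k = l
    · subst h
      simp [mul_inv_cancel₀ (hspos k).ne', Matrix.one_apply_eq]
    · simp [Matrix.diagonal_apply_ne _ h, Matrix.one_apply_ne h]
  have hval : ((∑ i, α i • (Sig i)⁻¹)⁻¹).mulVec
      (∑ i, α i • ((Sig i)⁻¹).mulVec (X i)) j
      = (∑ i, f i)⁻¹ * ∑ i, f i * X i j := by
    rw [hsum_diag, houter, Matrix.mulVec_diagonal]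
    congr 1
    simp only [Finset.sum_apply, Pi.smul_apply, smul_eq_mul, hinv,
      Matrix.mulVec_diagonal]
    exact Finset.sum_congr rfl fun i _ => by ring
  rw [hval]
  have hlow : (Finset.univ.inf'
      (Finset.univ_nonempty_iff.mpr (Fin.pos_iff_nonempty.mp hn))
      (fun i => X i j)) * (∑ i, f i) ≤ ∑ i, f i * X i j := by
    rw [Finset.mul_sum]
    refine Finset.sum_le_sum fun i _ => ?_
    rw [mul_comm]
    exact mul_le_mul_of_nonneg_left
      (Finset.inf'_le (fun i => X i j) (Finset.mem_univ i)) (hf0 i)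
  have hhigh : ∑ i, f i * X i j ≤ (Finset.univ.sup'
      (Finset.univ_nonempty_iff.mpr (Fin.pos_iff_nonempty.mp hn))
      (fun i => X i j)) * (∑ i, f i) := by
    rw [Finset.mul_sum]
    refine Finset.sum_le_sum fun i _ => ?_
    rw [mul_comm _ (f i)]
    exact mul_le_mul_of_nonneg_left
      (Finset.le_sup' (fun i => X i j) (Finset.mem_univ i)) (hf0 i)
  constructor
  · rw [inv_mul_eq_div, le_div_iff₀ hs]
    exact hlow
  · rw [inv_mul_eq_div, div_le_iff₀ hs]
    exact hhigh
end

section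
/- Let $\mathcal{C} = \mathrm{conv}\left(\{(\varphi_{\Sigma_i}(X_i - \vartheta))_{i=1}^n : \vartheta \in \mathbb{R}^d\} \cup \{0\}\right) \subset \mathbb{R}^n$. Then $\mathcal{C}$ is convex and compact, and the strictly concave function $L \mapsto \frac{1}{n}\sum_{i=1}^n \log L_i$ attains its maximum over $\mathcal{C} \cap (0,\infty)^n$ at a unique point $\hat{L}$. -/
/-! The likelihood vectors `ϑ ↦ (φ_{Σᵢ}(Xᵢ - ϑ))ᵢ` trace a continuous curve vanishing at infinity,
so together with `0` they form a compact set, and by Carathéodory's theorem the convex hull of a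
compact set in finite dimensions is compact. On the nonnegative part of this hull the continuous
product `∏ Lᵢ` attains its maximum, which is positive; so the maximizer is strictly positive and
maximizes `∑ log Lᵢ = log ∏ Lᵢ` over the positive part. Uniqueness follows from the strict
concavity of `∑ log Lᵢ` on the positive orthant. -/

open MeasureTheory Matrix Finset

noncomputable def gaussDensity {d : ℕ} (S : Matrix (Fin d) (Fin d) ℝ)
    (x : Fin d → ℝ) : ℝ :=
  (Real.sqrt ((2 * Real.pi) ^ d * S.det))⁻¹ *
    Real.exp (-(1 / 2) * (x ⬝ᵥ S⁻¹.mulVec x))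

open Filter Set Function Topology

theorem IsCompact.convexHull_of_finiteDimensional {E : Type*} [NormedAddCommGroup E]
    [NormedSpace ℝ E] [FiniteDimensional ℝ E] {s : Set E} (hs : IsCompact s) :
    IsCompact (convexHull ℝ s) := by
  rcases s.eq_empty_or_nonempty with rfl | ⟨p, hp⟩
  · simp
  let N := Module.finrank ℝ E + 1
  let combine : (Fin N → ℝ) × (Fin N → E) → E := fun q => ∑ i, q.1 i • q.2 i
  suffices convexHull ℝ s = combine '' (stdSimplex ℝ (Fin N) ×ˢ univ.pi fun _ => s) by
    rw [this]
    exact ((isCompact_stdSimplex ℝ _).prod (isCompact_univ_pi fun _ => hs)).image (by fun_prop)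
  refine subset_antisymm (fun x hx => ?_) ?_
  -- Carathéodory: at most `N` points are needed; pad with zero weights to exactly `N`.
  · obtain ⟨ι, _, z, w, hzs, hz, hw0, hw1, rfl⟩ := eq_pos_convex_span_of_mem_convexHull hx
    have hcard : Fintype.card ι ≤ Fintype.card (Fin N) := by
      simpa [N] using hz.card_le_finrank_succ.trans
        (Nat.succ_le_succ (Submodule.finrank_le _))
    obtain ⟨e⟩ := Embedding.nonempty_of_card_le hcard
    have hout : ∀ j ∉ range e, extend e w 0 j = 0 := fun j hj => by
      rw [extend_apply' _ _ _ (by simpa using hj), Pi.zero_apply]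
    refine ⟨(extend e w 0, extend e z fun _ => p), ⟨⟨fun j => ?_, ?_⟩, fun j _ => ?_⟩, ?_⟩
    · dsimp only
      by_cases hj : j ∈ range e
      · obtain ⟨i, rfl⟩ := hj
        rw [e.injective.extend_apply]
        exact (hw0 i).le
      · rw [hout j hj]
    · rw [← hw1]
      exact (Fintype.sum_of_injective e e.injective _ _ hout
        fun i => (e.injective.extend_apply _ _ i).symm).symm
    · dsimp only
      by_cases hj : j ∈ range e
      · obtain ⟨i, rfl⟩ := hj
        rw [e.injective.extend_apply]
        exact hzs (mem_range_self i)
      · rw [extend_apply' _ _ _ (by simpa using hj)]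
        exact hp
    · exact (Fintype.sum_of_injective e e.injective _ _ (fun j hj => by simp [hout j hj])
        fun i => by simp [e.injective.extend_apply]).symm
  · rintro _ ⟨⟨w, z⟩, ⟨hw, hz⟩, rfl⟩
    exact (convex_convexHull ℝ s).sum_mem (fun i _ => hw.1 i) hw.2
      fun i _ => subset_convexHull ℝ s (hz i (mem_univ i))

theorem Matrix.PosDef.exists_pos_mul_norm_sq_le {m : Type*} [Fintype m] {A : Matrix m m ℝ}
    (hA : A.PosDef) : ∃ c > 0, ∀ x : m → ℝ, c * ‖x‖ ^ 2 ≤ x ⬝ᵥ A *ᵥ x := by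
  cases isEmpty_or_nonempty m
  · exact ⟨1, one_pos, fun x => by simp [Subsingleton.elim x 0]⟩
  have hQ : Continuous fun x : m → ℝ => x ⬝ᵥ A *ᵥ x := by fun_prop
  obtain ⟨u, hu, hmin⟩ := (isCompact_sphere (0 : m → ℝ) 1).exists_isMinOn
    (NormedSpace.sphere_nonempty.2 zero_le_one) hQ.continuousOn
  refine ⟨u ⬝ᵥ A *ᵥ u, hA.dotProduct_mulVec_pos (ne_zero_of_mem_unit_sphere ⟨u, hu⟩), fun x => ?_⟩
  rcases eq_or_ne x 0 with rfl | hx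
  · simp
  have hx' : 0 < ‖x‖ := norm_pos_iff.2 hx
  have hscaled : ‖x‖⁻¹ • x ∈ Metric.sphere (0 : m → ℝ) 1 := by
    simp [norm_smul, hx'.ne']
  have hle : u ⬝ᵥ A *ᵥ u ≤ (‖x‖⁻¹ • x) ⬝ᵥ A *ᵥ (‖x‖⁻¹ • x) := hmin hscaled
  simp only [mulVec_smul, smul_dotProduct, dotProduct_smul, smul_eq_mul] at hle
  calc (u ⬝ᵥ A *ᵥ u) * ‖x‖ ^ 2 ≤ ‖x‖⁻¹ * (‖x‖⁻¹ * (x ⬝ᵥ A *ᵥ x)) * ‖x‖ ^ 2 := by gcongr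
    _ = x ⬝ᵥ A *ᵥ x := by field_simp

theorem Matrix.PosDef.tendsto_dotProduct_mulVec_cocompact {m : Type*} [Fintype m]
    {A : Matrix m m ℝ} (hA : A.PosDef) :
    Tendsto (fun x : m → ℝ => x ⬝ᵥ A *ᵥ x) (cocompact _) atTop := by
  obtain ⟨c, hc, hle⟩ := hA.exists_pos_mul_norm_sq_le
  exact tendsto_atTop_mono hle <| (tendsto_const_mul_atTop_of_pos hc).2 <|
    (tendsto_pow_atTop two_ne_zero).comp tendsto_norm_cocompact_atTop

theorem gaussDensity_pos {d : ℕ} {S : Matrix (Fin d) (Fin d) ℝ} (hS : S.PosDef)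
    (x : Fin d → ℝ) : 0 < gaussDensity S x := by
  have := hS.det_pos
  unfold gaussDensity
  positivity

theorem continuous_gaussDensity {d : ℕ} (S : Matrix (Fin d) (Fin d) ℝ) :
    Continuous (gaussDensity S) := by
  unfold gaussDensity
  fun_prop

theorem tendsto_gaussDensity_cocompact {d : ℕ} {S : Matrix (Fin d) (Fin d) ℝ}
    (hS : S.PosDef) : Tendsto (gaussDensity S) (cocompact _) (𝓝 0) := by
  have hexp := Real.tendsto_exp_atBot.comp
    (hS.inv.tendsto_dotProduct_mulVec_cocompact.const_mul_atTop_of_neg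
      (by norm_num : -(1 / 2 : ℝ) < 0))
  unfold gaussDensity
  simpa using hexp.const_mul (Real.sqrt ((2 * Real.pi) ^ d * S.det))⁻¹

theorem tendsto_gaussDensity_sub_cocompact {d : ℕ} {S : Matrix (Fin d) (Fin d) ℝ}
    (hS : S.PosDef) (x : Fin d → ℝ) :
    Tendsto (fun ϑ => gaussDensity S (x - ϑ)) (cocompact _) (𝓝 0) :=
  (tendsto_gaussDensity_cocompact hS).comp
    (Homeomorph.subLeft x).isClosedEmbedding.tendsto_cocompact

theorem convex_setOf_forall_pos {ι : Type*} : Convex ℝ {L : ι → ℝ | ∀ i, 0 < L i} := by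
  simpa [Set.pi] using convex_pi (s := univ) fun _ _ => convex_Ioi (0 : ℝ)

theorem StrictConcaveOn.const_mul {E : Type*} [AddCommMonoid E] [Module ℝ E] {s : Set E}
    {f : E → ℝ} {c : ℝ} (hf : StrictConcaveOn ℝ s f) (hc : 0 < c) :
    StrictConcaveOn ℝ s fun x => c * f x := by
  refine ⟨hf.1, fun x hx y hy hxy a b ha hb hab => ?_⟩
  have := mul_lt_mul_of_pos_left (hf.2 hx hy hxy ha hb hab) hc
  simp only [smul_eq_mul] at this ⊢
  linarith

theorem strictConcaveOn_sum_log {ι : Type*} [Fintype ι] :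
    StrictConcaveOn ℝ {L : ι → ℝ | ∀ i, 0 < L i} fun L => ∑ i, Real.log (L i) := by
  refine ⟨convex_setOf_forall_pos, fun x hx y hy hxy a b ha hb hab => ?_⟩
  obtain ⟨j, hj⟩ := ne_iff.1 hxy
  simp only [smul_eq_mul, Finset.mul_sum, ← Finset.sum_add_distrib, Pi.add_apply, Pi.smul_apply]
  exact Finset.sum_lt_sum
    (fun i _ => strictConcaveOn_log_Ioi.concaveOn.2 (hx i) (hy i) ha.le hb.le hab)
    ⟨j, mem_univ j, strictConcaveOn_log_Ioi.2 (hx j) (hy j) hj ha hb hab⟩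

theorem strictConcaveOn_one_div_mul_sum_log (n : ℕ) :
    StrictConcaveOn ℝ {L : Fin n → ℝ | ∀ i, 0 < L i}
      fun L => (1 / (n : ℝ)) * ∑ i, Real.log (L i) := by
  rcases n.eq_zero_or_pos with rfl | hn
  -- for `n = 0` the objective is the junk constant `1 / 0 * 0 = 0`, but its domain is a point
  · exact ⟨convex_setOf_forall_pos, fun x _ y _ hxy => absurd (Subsingleton.elim x y) hxy⟩
  · exact strictConcaveOn_sum_log.const_mul (by positivity)

theorem exists_isMaxOn_sum_log {ι : Type*} [Fintype ι] {C : Set (ι → ℝ)} (hC : IsCompact C)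
    {L₀ : ι → ℝ} (hL₀ : L₀ ∈ C) (hL₀_pos : ∀ i, 0 < L₀ i) :
    ∃ L ∈ C ∩ {L | ∀ i, 0 < L i},
      IsMaxOn (fun L => ∑ i, Real.log (L i)) (C ∩ {L | ∀ i, 0 < L i}) L := by
  obtain ⟨L, ⟨hLC, hL_nonneg⟩, hmax⟩ :=
    (hC.inter_right (isClosed_Ici (a := (0 : ι → ℝ)))).exists_isMaxOn
      ⟨L₀, hL₀, fun i => (hL₀_pos i).le⟩
      (by fun_prop : Continuous fun L : ι → ℝ => ∏ i, L i).continuousOn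
  have hprod_pos : 0 < ∏ i, L i :=
    (prod_pos fun i _ => hL₀_pos i).trans_le (hmax ⟨hL₀, fun i => (hL₀_pos i).le⟩)
  have hL_pos : ∀ i, 0 < L i := fun i =>
    (hL_nonneg i).lt_of_ne' (prod_ne_zero_iff.1 hprod_pos.ne' i (mem_univ i))
  refine ⟨L, ⟨hLC, hL_pos⟩, fun L' ⟨hL'C, hL'_pos⟩ => ?_⟩
  have hL'max : ∏ i, L' i ≤ ∏ i, L i := hmax ⟨hL'C, fun i => (hL'_pos i).le⟩
  show ∑ i, Real.log (L' i) ≤ ∑ i, Real.log (L i)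
  rw [← Real.log_prod fun i _ => (hL_pos i).ne',
    ← Real.log_prod fun i _ => (hL'_pos i).ne']
  exact Real.log_le_log (prod_pos fun i _ => hL'_pos i) hL'max

theorem isCompact_setOf_gaussDensity_sub_union_zero {d n : ℕ} (X : Fin n → (Fin d → ℝ))
    {Sig : Fin n → Matrix (Fin d) (Fin d) ℝ} (hpd : ∀ i, (Sig i).PosDef) :
    IsCompact ({L : Fin n → ℝ | ∃ ϑ : Fin d → ℝ,
      L = fun i => gaussDensity (Sig i) (X i - ϑ)} ∪ {0}) := by
  have hrange : {L : Fin n → ℝ | ∃ ϑ : Fin d → ℝ, L = fun i => gaussDensity (Sig i) (X i - ϑ)}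
      ∪ {0} = insert 0 (range fun ϑ i => gaussDensity (Sig i) (X i - ϑ)) := by
    ext L
    simp [eq_comm]
  rw [hrange]
  exact Tendsto.isCompact_insert_range_of_cocompact
    (tendsto_pi_nhds.2 fun i => tendsto_gaussDensity_sub_cocompact (hpd i) (X i))
    (continuous_pi fun i => (continuous_gaussDensity _).comp (continuous_const.sub continuous_id))

/-- The feasible set of likelihood vectors is convex and compact, and the
average-log objective attains its maximum over the positive part at a
unique point. -/
theorem likelihood_set_compact_convex_unique_max {d n : ℕ}
    (X : Fin n → (Fin d → ℝ))
    (Sig : Fin n → Matrix (Fin d) (Fin d) ℝ)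
    (hpd : ∀ i, (Sig i).PosDef) :
    Convex ℝ (convexHull ℝ
        (({L : Fin n → ℝ | ∃ ϑ : Fin d → ℝ,
            L = fun i => gaussDensity (Sig i) (X i - ϑ)} : Set (Fin n → ℝ))
          ∪ {0})) ∧
    IsCompact (convexHull ℝ
        (({L : Fin n → ℝ | ∃ ϑ : Fin d → ℝ,
            L = fun i => gaussDensity (Sig i) (X i - ϑ)} : Set (Fin n → ℝ))
          ∪ {0})) ∧
    (∃! Lhat : Fin n → ℝ,
      Lhat ∈ (convexHull ℝ
          (({L : Fin n → ℝ | ∃ ϑ : Fin d → ℝ,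
              L = fun i => gaussDensity (Sig i) (X i - ϑ)} : Set (Fin n → ℝ))
            ∪ {0})) ∩ {L | ∀ i, 0 < L i} ∧
      IsMaxOn (fun L : Fin n → ℝ => (1 / (n : ℝ)) * ∑ i, Real.log (L i))
        ((convexHull ℝ
          (({L : Fin n → ℝ | ∃ ϑ : Fin d → ℝ,
              L = fun i => gaussDensity (Sig i) (X i - ϑ)} : Set (Fin n → ℝ))
            ∪ {0})) ∩ {L | ∀ i, 0 < L i}) Lhat) := by
  set S : Set (Fin n → ℝ) :=
    {L | ∃ ϑ : Fin d → ℝ, L = fun i => gaussDensity (Sig i) (X i - ϑ)} ∪ {0}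
  have hC : IsCompact (convexHull ℝ S) :=
    (isCompact_setOf_gaussDensity_sub_union_zero X hpd).convexHull_of_finiteDimensional
  have hL₀ : (fun i => gaussDensity (Sig i) (X i - 0)) ∈ convexHull ℝ S :=
    subset_convexHull ℝ S (Or.inl ⟨0, rfl⟩)
  obtain ⟨Lhat, hLhat, hmax⟩ :=
    exists_isMaxOn_sum_log hC hL₀ fun i => gaussDensity_pos (hpd i) _
  have hmax' := hmax.comp_mono (monotone_mul_left_of_nonneg (by positivity : 0 ≤ 1 / (n : ℝ)))
  refine ⟨convex_convexHull ℝ S, hC, Lhat, ⟨hLhat, hmax'⟩, fun L hL => ?_⟩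
  exact ((strictConcaveOn_one_div_mul_sum_log n).subset inter_subset_right
    ((convex_convexHull ℝ S).inter convex_setOf_forall_pos)).eq_of_isMaxOn hL.2 hmax' hL.1 hLhat
end

section
/- In dimension $d=2$ with $n=3$ observations $X_1=(0,1)$, $X_2=(\tfrac{\sqrt{3}}{2},-\tfrac12)$, $X_3=(-\tfrac{\sqrt3}{2},-\tfrac12)$ and common covariance $\sigma^2 I_2$ with $\sigma^2 = 3/\log 256$: the discrete measure $G' = \tfrac13\sum_{i=1}^3 \delta_{X_i/2}$ satisfies $f_{G',\sigma^2 I_2}(X_i) = \frac{2^{2/3}\log 2}{3\pi} = f_{\delta_0, \sigma^2 I_2}(X_i)$ for each $i = 1,2,3$. -/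
open MeasureTheory Matrix

noncomputable def mixDensity {d : ℕ} (G : Measure (Fin d → ℝ))
    (S : Matrix (Fin d) (Fin d) ℝ) (x : Fin d → ℝ) : ℝ :=
  ∫ θ, gaussDensity S (x - θ) ∂G

lemma gauss_sm (S : Matrix (Fin 2) (Fin 2) ℝ) (x : Fin 2 → ℝ) :
    StronglyMeasurable (fun θ : Fin 2 → ℝ => gaussDensity S (x - θ)) := by
  apply Continuous.stronglyMeasurable
  unfold gaussDensity
  simp only [dotProduct, mulVec]
  continuity

lemma integrable_dirac'' {α E : Type*} [MeasurableSpace α] [MeasurableSingletonClass α]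
    [NormedAddCommGroup E] {f : α → E} (hf : StronglyMeasurable f) (a : α) :
    Integrable f (Measure.dirac a) :=
  ⟨hf.aestronglyMeasurable, by
    rw [HasFiniteIntegral, lintegral_dirac]; exact ENNReal.coe_lt_top⟩

lemma mix_three (S : Matrix (Fin 2) (Fin 2) ℝ) (x a b c : Fin 2 → ℝ) :
    mixDensity ((3 : ENNReal)⁻¹ •
        (Measure.dirac a + Measure.dirac b + Measure.dirac c)) S x
      = 3⁻¹ * (gaussDensity S (x - a) + gaussDensity S (x - b)
          + gaussDensity S (x - c)) := by
  have hm := gauss_sm S x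
  rw [mixDensity, integral_smul_measure,
    integral_add_measure ((integrable_dirac'' hm a).add_measure (integrable_dirac'' hm b))
      (integrable_dirac'' hm c),
    integral_add_measure (integrable_dirac'' hm a) (integrable_dirac'' hm b),
    integral_dirac' _ _ hm, integral_dirac' _ _ hm, integral_dirac' _ _ hm]
  simp [ENNReal.toReal_inv]

lemma mix_dirac0 (S : Matrix (Fin 2) (Fin 2) ℝ) (x : Fin 2 → ℝ) :
    mixDensity (Measure.dirac (0 : Fin 2 → ℝ)) S x = gaussDensity S x := by
  rw [mixDensity, integral_dirac' _ _ (gauss_sm S x), sub_zero]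

lemma gd (v : Fin 2 → ℝ) :
    gaussDensity ((3 / Real.log 256) • (1 : Matrix (Fin 2) (Fin 2) ℝ)) v
      = 4 * Real.log 2 / (3 * Real.pi) * (2 : ℝ) ^ (-(4/3) * (v 0 ^ 2 + v 1 ^ 2)) := by
  have h256 : Real.log 256 = 8 * Real.log 2 := by
    rw [show (256 : ℝ) = 2 ^ (8 : ℕ) by norm_num, Real.log_pow]
    push_cast; ring
  have hL : 0 < Real.log 2 := Real.log_pos (by norm_num)
  set s : ℝ := 3 / Real.log 256 with hs
  have hs0 : 0 < s := by rw [hs, h256]; positivity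
  have hinv : (s • (1 : Matrix (Fin 2) (Fin 2) ℝ))⁻¹ = s⁻¹ • 1 := by
    apply Matrix.inv_eq_right_inv
    rw [smul_mul_assoc, one_mul, smul_smul, mul_inv_cancel₀ hs0.ne', one_smul]
  have hdet : (s • (1 : Matrix (Fin 2) (Fin 2) ℝ)).det = s ^ 2 := by
    simp [Matrix.det_smul]
  unfold gaussDensity
  rw [hinv, hdet, Matrix.smul_mulVec, Matrix.one_mulVec]
  have hdot : v ⬝ᵥ (s⁻¹ • v) = s⁻¹ * (v 0 ^ 2 + v 1 ^ 2) := by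
    simp [dotProduct, Fin.sum_univ_two]; ring
  rw [hdot]
  have hsqrt : Real.sqrt ((2 * Real.pi) ^ 2 * s ^ 2) = 2 * Real.pi * s := by
    rw [show (2 * Real.pi) ^ 2 * s ^ 2 = (2 * Real.pi * s) ^ 2 by ring,
      Real.sqrt_sq (by positivity)]
  rw [hsqrt]
  have hexp : Real.exp (-(1/2) * (s⁻¹ * (v 0 ^ 2 + v 1 ^ 2)))
      = (2 : ℝ) ^ (-(4/3) * (v 0 ^ 2 + v 1 ^ 2)) := by
    rw [Real.rpow_def_of_pos (by norm_num : (0:ℝ) < 2)]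
    congr 1
    rw [hs, h256]
    field_simp
    ring
  rw [hexp, hs, h256]
  have hπ : Real.pi ≠ 0 := Real.pi_ne_zero
  field_simp
  ring

lemma gd' (v : Fin 2 → ℝ) (e : ℝ) (h : -(4/3) * (v 0 ^ 2 + v 1 ^ 2) = e) :
    gaussDensity ((3 / Real.log 256) • (1 : Matrix (Fin 2) (Fin 2) ℝ)) v
      = 4 * Real.log 2 / (3 * Real.pi) * (2 : ℝ) ^ e := by
  rw [gd, h]

lemma hA : (2 : ℝ) ^ (-(1:ℝ)/3) = (2:ℝ) ^ ((2:ℝ)/3) / 2 := by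
  rw [eq_div_iff (two_ne_zero), ← Real.rpow_add_one (by norm_num : (2:ℝ) ≠ 0)]
  norm_num

lemma hB : (2 : ℝ) ^ (-(7:ℝ)/3) = (2:ℝ) ^ ((2:ℝ)/3) / 8 := by
  rw [eq_div_iff (by norm_num : (8:ℝ) ≠ 0),
    show (8:ℝ) = (2:ℝ) ^ ((3:ℕ):ℝ) by rw [Real.rpow_natCast]; norm_num,
    ← Real.rpow_add (by norm_num : (0:ℝ) < 2)]
  norm_num

lemma hD : (2 : ℝ) ^ (-(4:ℝ)/3) = (2:ℝ) ^ ((2:ℝ)/3) / 4 := by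
  rw [eq_div_iff (by norm_num : (4:ℝ) ≠ 0),
    show (4:ℝ) = (2:ℝ) ^ ((2:ℕ):ℝ) by rw [Real.rpow_natCast]; norm_num,
    ← Real.rpow_add (by norm_num : (0:ℝ) < 2)]
  norm_num

lemma fin3_mk_two (h : 2 < 3) : (⟨2, h⟩ : Fin 3) = 2 := rfl

/-- Non-uniqueness example: with the three observations at the vertices of an
equilateral triangle and `σ² = 3/log 256`, the prior `G' = (1/3)∑ δ_{Xᵢ/2}`
has the same fitted likelihood values `2^{2/3} log 2 / (3π)` as `δ₀`. -/
theorem nonuniqueness_fitted_values :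
    ∀ X : Fin 3 → (Fin 2 → ℝ),
      X = ![![0, 1],
            ![Real.sqrt 3 / 2, -(1 / 2)],
            ![-(Real.sqrt 3 / 2), -(1 / 2)]] →
    ∀ i : Fin 3,
      mixDensity
          ((3 : ENNReal)⁻¹ •
            (Measure.dirac ((1 / 2 : ℝ) • X 0) +
             Measure.dirac ((1 / 2 : ℝ) • X 1) +
             Measure.dirac ((1 / 2 : ℝ) • X 2)))
          ((3 / Real.log 256) • (1 : Matrix (Fin 2) (Fin 2) ℝ)) (X i)
        = (2 : ℝ) ^ ((2 : ℝ) / 3) * Real.log 2 / (3 * Real.pi) ∧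
      mixDensity (Measure.dirac (0 : Fin 2 → ℝ))
          ((3 / Real.log 256) • (1 : Matrix (Fin 2) (Fin 2) ℝ)) (X i)
        = (2 : ℝ) ^ ((2 : ℝ) / 3) * Real.log 2 / (3 * Real.pi) := by
  intro X hX i
  have h3 : Real.sqrt 3 ^ 2 = 3 := Real.sq_sqrt (by norm_num)
  subst hX
  fin_cases i
  · constructor
    · rw [mix_three,
        gd' _ (-(1:ℝ)/3) (by
          simp only [fin3_mk_two, Fin.mk_zero, Fin.mk_one, Pi.sub_apply, Pi.smul_apply, smul_eq_mul, Matrix.cons_val_zero,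
            Matrix.cons_val_one, Matrix.head_cons, Matrix.cons_val_two, Matrix.tail_cons]
          norm_num),
        gd' _ (-(7:ℝ)/3) (by
          simp only [fin3_mk_two, Fin.mk_zero, Fin.mk_one, Pi.sub_apply, Pi.smul_apply, smul_eq_mul, Matrix.cons_val_zero,
            Matrix.cons_val_one, Matrix.head_cons, Matrix.cons_val_two, Matrix.tail_cons]
          linear_combination -(1/12) * h3),
        gd' _ (-(7:ℝ)/3) (by
          simp only [fin3_mk_two, Fin.mk_zero, Fin.mk_one, Pi.sub_apply, Pi.smul_apply, smul_eq_mul, Matrix.cons_val_zero,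
            Matrix.cons_val_one, Matrix.head_cons, Matrix.cons_val_two, Matrix.tail_cons]
          linear_combination -(1/12) * h3),
        hA, hB]
      ring
    · rw [mix_dirac0,
        gd' _ (-(4:ℝ)/3) (by
          simp only [fin3_mk_two, Fin.mk_zero, Fin.mk_one, Matrix.cons_val_zero, Matrix.cons_val_one, Matrix.head_cons]
          norm_num),
        hD]
      ring
  · constructor
    · rw [mix_three,
        gd' _ (-(7:ℝ)/3) (by
          simp only [fin3_mk_two, Fin.mk_zero, Fin.mk_one, Pi.sub_apply, Pi.smul_apply, smul_eq_mul, Matrix.cons_val_zero,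
            Matrix.cons_val_one, Matrix.head_cons, Matrix.cons_val_two, Matrix.tail_cons]
          linear_combination -(1/3) * h3),
        gd' _ (-(1:ℝ)/3) (by
          simp only [fin3_mk_two, Fin.mk_zero, Fin.mk_one, Pi.sub_apply, Pi.smul_apply, smul_eq_mul, Matrix.cons_val_zero,
            Matrix.cons_val_one, Matrix.head_cons, Matrix.cons_val_two, Matrix.tail_cons]
          linear_combination -(1/12) * h3),
        gd' _ (-(7:ℝ)/3) (by
          simp only [fin3_mk_two, Fin.mk_zero, Fin.mk_one, Pi.sub_apply, Pi.smul_apply, smul_eq_mul, Matrix.cons_val_zero,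
            Matrix.cons_val_one, Matrix.head_cons, Matrix.cons_val_two, Matrix.tail_cons]
          linear_combination -(3/4) * h3),
        hA, hB]
      ring
    · rw [mix_dirac0,
        gd' _ (-(4:ℝ)/3) (by
          simp only [fin3_mk_two, Fin.mk_zero, Fin.mk_one, Matrix.cons_val_zero, Matrix.cons_val_one, Matrix.head_cons,
            Matrix.cons_val_two, Matrix.tail_cons]
          linear_combination -(1/3) * h3),
        hD]
      ring
  · constructor
    · rw [mix_three,
        gd' _ (-(7:ℝ)/3) (by
          simp only [fin3_mk_two, Fin.mk_zero, Fin.mk_one, Pi.sub_apply, Pi.smul_apply, smul_eq_mul, Matrix.cons_val_zero,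
            Matrix.cons_val_one, Matrix.head_cons, Matrix.cons_val_two, Matrix.tail_cons]
          linear_combination -(1/3) * h3),
        gd' _ (-(7:ℝ)/3) (by
          simp only [fin3_mk_two, Fin.mk_zero, Fin.mk_one, Pi.sub_apply, Pi.smul_apply, smul_eq_mul, Matrix.cons_val_zero,
            Matrix.cons_val_one, Matrix.head_cons, Matrix.cons_val_two, Matrix.tail_cons]
          linear_combination -(3/4) * h3),
        gd' _ (-(1:ℝ)/3) (by
          simp only [fin3_mk_two, Fin.mk_zero, Fin.mk_one, Pi.sub_apply, Pi.smul_apply, smul_eq_mul, Matrix.cons_val_zero,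
            Matrix.cons_val_one, Matrix.head_cons, Matrix.cons_val_two, Matrix.tail_cons]
          linear_combination -(1/12) * h3),
        hA, hB]
      ring
    · rw [mix_dirac0,
        gd' _ (-(4:ℝ)/3) (by
          simp only [fin3_mk_two, Fin.mk_zero, Fin.mk_one, Matrix.cons_val_zero, Matrix.cons_val_one, Matrix.head_cons,
            Matrix.cons_val_two, Matrix.tail_cons]
          linear_combination -(1/3) * h3),
        hD]
      ring
end
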